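/- Bi-Lipschitz property of the fiber-wise collar straightening map: with φ, ψ as above, for x = (t_x, x̄), y = (t_y, ȳ) ∈ R_{-δ} = (-δ,0) × ℝ^{d-1}, define x' = ((1 + t_x/δ)φ(x̄) - (t_x/δ)ψ(x̄), x̄) and similarly y'. Then there exist constants K_L ≥ 1 and K'_L ≤ 1, depending only on L and not on δ, such that K'_L |x - y| ≤ |x' - y'| ≤ K_L |x - y|. -/

import Mathlib

open MeasureTheory Real Set Filter

noncomputable section

/-- Surface area of the unit `(d-1)`-sphere in `ℝ^d`. -/
def sphereArea (d : ℕ) : ℝ :=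
  d * (volume (Metric.ball (0 : EuclideanSpace ℝ (Fin d)) 1)).toReal

/-- The rescaled nonlocal kernel `γ_δ^β(r) = C_{d,p,β} δ^{-(d+p-β)} r^{-β} 1_{r<δ}`
with `C_{d,p,β} = (d+p-β)/s_{d-1}`. -/
def nlKernel (d : ℕ) (p β δ r : ℝ) : ℝ :=
  if r < δ then (((d : ℝ) + p - β) / (sphereArea d * δ ^ ((d : ℝ) + p - β))) * r ^ (-β) else 0

/-- The (p-th power of the) nonlocal seminorm `|u|^p_{S_δ^β(U)}`. -/
def Ssem (d : ℕ) (p β δ : ℝ) (U : Set (EuclideanSpace ℝ (Fin d)))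
    (u : EuclideanSpace ℝ (Fin d) → ℝ) : ℝ :=
  ∫ x in U, ∫ y in U, nlKernel d p β δ (dist y x) * |u y - u x| ^ p

/-- The (p-th power of the) nonlocal trace seminorm `|u|^p_{T_δ^β(Ω)}`. -/
def Tsem (d : ℕ) (p β δ : ℝ) (Ω : Set (EuclideanSpace ℝ (Fin d)))
    (u : EuclideanSpace ℝ (Fin d) → ℝ) : ℝ :=
  δ ^ (β - 2) * ∫ x in Ω, ∫ y in Ω,
    |u y - u x| ^ p / ((max (dist y x) δ) ^ ((d : ℝ) + p - 2) * (min (dist y x) δ) ^ β)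

/-- The p-th power of the `L^p` norm of `u` over `U`. -/
def LpPow (d : ℕ) (p : ℝ) (U : Set (EuclideanSpace ℝ (Fin d)))
    (u : EuclideanSpace ℝ (Fin d) → ℝ) : ℝ :=
  ∫ x in U, |u x| ^ p

/-- The stripe `(a,b) × ℝ^{d-1}`. -/
def stripe (d : ℕ) (hd : 0 < d) (a b : ℝ) : Set (EuclideanSpace ℝ (Fin d)) :=
  {x | a < x ⟨0, hd⟩ ∧ x ⟨0, hd⟩ < b}

/-- The half space `(a,∞) × ℝ^{d-1}`. -/
def stripeInf (d : ℕ) (hd : 0 < d) (a : ℝ) : Set (EuclideanSpace ℝ (Fin d)) :=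
  {x | a < x ⟨0, hd⟩}

/-- The point `(t, xb) ∈ ℝ × ℝ^{d-1} = ℝ^d`. -/
def mkPt (n : ℕ) (t : ℝ) (xb : EuclideanSpace ℝ (Fin n)) :
    EuclideanSpace ℝ (Fin (n + 1)) :=
  WithLp.toLp 2 (Fin.cons t (fun j => xb j) : Fin (n + 1) → ℝ)

/-- The tangential part `xb` of a point `x = (t, xb) ∈ ℝ^d`. -/
def tailPt (n : ℕ) (x : EuclideanSpace ℝ (Fin (n + 1))) : EuclideanSpace ℝ (Fin n) :=
  WithLp.toLp 2 (fun j : Fin n => x j.succ)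

/-- The graph `Φ(ℝ^{d-1}) = {(φ(xb), xb)} ⊂ ℝ^d` of `φ`. -/
def graphSet (n : ℕ) (φ : EuclideanSpace ℝ (Fin n) → ℝ) :
    Set (EuclideanSpace ℝ (Fin (n + 1))) :=
  {z | ∃ xb, z = mkPt n (φ xb) xb}

/-- The admissible offset levels at `xb`:
`{t : dist((t,xb), Φ(ℝ^{d-1})) = δ and t < φ(xb)}`. -/
def offsetLevels (n : ℕ) (φ : EuclideanSpace ℝ (Fin n) → ℝ) (δ : ℝ)
    (xb : EuclideanSpace ℝ (Fin n)) : Set ℝ :=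
  {t | Metric.infDist (mkPt n t xb) (graphSet n φ) = δ ∧ t < φ xb}

/-- The inner `δ`-offset `ψ` of the Lipschitz graph of `φ`, defined as the minimal
admissible offset level. -/
def psiOff (n : ℕ) (φ : EuclideanSpace ℝ (Fin n) → ℝ) (δ : ℝ)
    (xb : EuclideanSpace ℝ (Fin n)) : ℝ :=
  sInf (offsetLevels n φ δ xb)

/-- The fiber-wise collar straightening map sending
`x = (t, xb) ∈ (-δ,0) × ℝ^{d-1}` to `x' = ((1+t/δ)φ(xb) - (t/δ)ψ(xb), xb)`. -/
def collarMap (n : ℕ) (φ ψ : EuclideanSpace ℝ (Fin n) → ℝ) (δ : ℝ)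
    (x : EuclideanSpace ℝ (Fin (n + 1))) : EuclideanSpace ℝ (Fin (n + 1)) :=
  mkPt n ((1 + x 0 / δ) * φ (tailPt n x) - (x 0 / δ) * ψ (tailPt n x)) (tailPt n x)

/-!
The distance from `(t, z)` to the graph of `φ` is at most `φ z - t` (vertical segment) and at least
`(φ z - t) / √(1 + L²)` (the graph avoids the downward cone of slope `L` at `(φ z, z)`), so the
offset satisfies `δ ≤ φ - ψ ≤ √(1 + L²) δ`. The region above the graph is invariant under the
translations `(L r, v)` with `‖v‖ = r`; moving the offset point by such a vector keeps it within
distance `δ` of the graph, which makes `ψ` `L`-Lipschitz. The collar map fixes the tangential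
coordinate and, in the normal one, stretches by `(φ - ψ) / δ ∈ [1, √(1 + L²)]` up to an error of
`3 L` times the tangential displacement; both Lipschitz bounds follow.
-/

open Metric NNReal

lemma infDist_le_infDist_of_forall_exists_dist_le {α : Type*} [PseudoMetricSpace α]
    {x y : α} {s t : Set α} (ht : t.Nonempty) (h : ∀ b ∈ t, ∃ a ∈ s, dist x a ≤ dist y b) :
    infDist x s ≤ infDist y t :=
  (le_infDist ht).2 fun b hb =>
    let ⟨_, ha, hab⟩ := h b hb
    (infDist_le_dist_of_mem ha).trans hab

lemma infDist_add_le_of_add_mem {E : Type*} [SeminormedAddCommGroup E] {s : Set E}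
    (hs : s.Nonempty) {v : E} (hv : ∀ u ∈ s, u + v ∈ s) (p : E) :
    infDist (p + v) s ≤ infDist p s :=
  infDist_le_infDist_of_forall_exists_dist_le hs fun u hu =>
    ⟨u + v, hv u hu, (dist_add_right p u v).le⟩

lemma infDist_setOf_eq_le_infDist_setOf_le {E : Type*} [NormedAddCommGroup E] [NormedSpace ℝ E]
    {f g : E → ℝ} (hf : Continuous f) (hg : Continuous g) {p : E} (hp : f p ≤ g p) :
    infDist p {q | f q = g q} ≤ infDist p {q | g q ≤ f q} := by
  rcases Set.eq_empty_or_nonempty {q | g q ≤ f q} with he | hne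
  · have : {q | f q = g q} = ∅ := Set.subset_eq_empty (fun q hq => hq.ge) he
    simp [this, he]
  refine infDist_le_infDist_of_forall_exists_dist_le hne fun u hu => ?_
  -- the segment from `p` to `u` crosses the set where `f = g`
  obtain ⟨q, hq, hfq⟩ := (convex_segment p u).isPreconnected.intermediate_value
    (left_mem_segment ℝ p u) (right_mem_segment ℝ p u) (hf.sub hg).continuousOn
    ⟨sub_nonpos.2 hp, sub_nonneg.2 hu⟩
  exact ⟨q, sub_eq_zero.1 hfq,
    by linarith [dist_add_dist_of_mem_segment hq, dist_nonneg (x := q) (y := u)]⟩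

section Coordinates

variable {n : ℕ}

@[simp] lemma mkPt_apply_zero (t : ℝ) (z : EuclideanSpace ℝ (Fin n)) : mkPt n t z 0 = t := rfl

@[simp] lemma tailPt_mkPt (t : ℝ) (z : EuclideanSpace ℝ (Fin n)) : tailPt n (mkPt n t z) = z := rfl

@[simp] lemma tailPt_add (p q : EuclideanSpace ℝ (Fin (n + 1))) :
    tailPt n (p + q) = tailPt n p + tailPt n q := rfl

lemma mkPt_eta (p : EuclideanSpace ℝ (Fin (n + 1))) : mkPt n (p 0) (tailPt n p) = p := by
  ext i
  induction i using Fin.cases <;> rfl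

lemma mkPt_add (t s : ℝ) (z w : EuclideanSpace ℝ (Fin n)) :
    mkPt n t z + mkPt n s w = mkPt n (t + s) (z + w) := by
  ext i
  induction i using Fin.cases <;> rfl

lemma dist_sq_eq_sq_add_dist_tailPt_sq (p q : EuclideanSpace ℝ (Fin (n + 1))) :
    dist p q ^ 2 = (p 0 - q 0) ^ 2 + dist (tailPt n p) (tailPt n q) ^ 2 := by
  rw [EuclideanSpace.dist_eq, EuclideanSpace.dist_eq, Real.sq_sqrt (by positivity),
    Real.sq_sqrt (by positivity), Fin.sum_univ_succ, Real.dist_eq, sq_abs]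
  rfl

lemma continuous_mkPt_left (z : EuclideanSpace ℝ (Fin n)) : Continuous fun t => mkPt n t z := by
  unfold mkPt
  fun_prop

lemma continuous_tailPt : Continuous (tailPt n) := by
  unfold tailPt
  fun_prop

lemma abs_sub_add_mul_dist_tailPt_le (L : ℝ) (p q : EuclideanSpace ℝ (Fin (n + 1))) :
    |p 0 - q 0| + L * dist (tailPt n p) (tailPt n q) ≤ √(1 + L ^ 2) * dist p q := by
  rw [show √(1 + L ^ 2) * dist p q = √((1 + L ^ 2) * dist p q ^ 2) by
    rw [Real.sqrt_mul (by positivity), Real.sqrt_sq dist_nonneg], dist_sq_eq_sq_add_dist_tailPt_sq]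
  refine Real.le_sqrt_of_sq_le ?_
  -- Cauchy–Schwarz for the vectors `(1, L)` and `(|p 0 - q 0|, dist (tailPt p) (tailPt q))`
  nlinarith [sq_nonneg (L * |p 0 - q 0| - dist (tailPt n p) (tailPt n q)), sq_abs (p 0 - q 0)]

lemma dist_le_mul_dist_of_abs_sub_le {A M : ℝ} {p q p' q' : EuclideanSpace ℝ (Fin (n + 1))}
    (htail : dist (tailPt n p') (tailPt n q') = dist (tailPt n p) (tailPt n q))
    (h : |p' 0 - q' 0| ≤ A * |p 0 - q 0| + M * dist (tailPt n p) (tailPt n q)) :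
    dist p' q' ≤ √(2 * A ^ 2 + 2 * M ^ 2 + 1) * dist p q := by
  rw [← Real.sqrt_sq dist_nonneg, ← Real.sqrt_sq (dist_nonneg (x := p)),
    ← Real.sqrt_mul (by positivity)]
  refine Real.sqrt_le_sqrt ?_
  rw [dist_sq_eq_sq_add_dist_tailPt_sq, dist_sq_eq_sq_add_dist_tailPt_sq, htail,
    ← sq_abs (p' 0 - q' 0), ← sq_abs (p 0 - q 0)]
  have h0 : 0 ≤ A * |p 0 - q 0| + M * dist (tailPt n p) (tailPt n q) := (abs_nonneg _).trans h
  nlinarith [pow_le_pow_left₀ (abs_nonneg _) h 2,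
    sq_nonneg (A * |p 0 - q 0| - M * dist (tailPt n p) (tailPt n q))]

end Coordinates

section Offset

variable {n : ℕ} {L : ℝ≥0} {φ : EuclideanSpace ℝ (Fin n) → ℝ} {δ : ℝ}

lemma graphSet_eq (φ : EuclideanSpace ℝ (Fin n) → ℝ) :
    graphSet n φ = {p | p 0 = φ (tailPt n p)} := by
  ext p
  constructor
  · rintro ⟨z, rfl⟩
    rfl
  · intro hp
    exact ⟨tailPt n p, by rw [← hp, mkPt_eta]⟩

lemma mkPt_mem_graphSet (φ : EuclideanSpace ℝ (Fin n) → ℝ) (z : EuclideanSpace ℝ (Fin n)) :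
    mkPt n (φ z) z ∈ graphSet n φ :=
  ⟨z, rfl⟩

lemma infDist_mkPt_graphSet_le_abs (φ : EuclideanSpace ℝ (Fin n) → ℝ)
    (z : EuclideanSpace ℝ (Fin n)) (t : ℝ) :
    infDist (mkPt n t z) (graphSet n φ) ≤ |φ z - t| := by
  refine (infDist_le_dist_of_mem (mkPt_mem_graphSet φ z)).trans (le_of_eq ?_)
  rw [← Real.sqrt_sq dist_nonneg, dist_sq_eq_sq_add_dist_tailPt_sq]
  simp [Real.sqrt_sq_eq_abs, abs_sub_comm]

lemma sub_le_mul_infDist_mkPt_graphSet (hφ : LipschitzWith L φ) (z : EuclideanSpace ℝ (Fin n))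
    (t : ℝ) : φ z - t ≤ √(1 + (L : ℝ) ^ 2) * infDist (mkPt n t z) (graphSet n φ) := by
  have hS : 0 < √(1 + (L : ℝ) ^ 2) := by positivity
  rw [← div_le_iff₀' hS, le_infDist ⟨_, mkPt_mem_graphSet φ z⟩]
  rintro _ ⟨w, rfl⟩
  rw [div_le_iff₀' hS]
  refine le_trans ?_ (abs_sub_add_mul_dist_tailPt_le L _ _)
  have := hφ.dist_le_mul z w
  simp only [mkPt_apply_zero, tailPt_mkPt, Real.dist_eq] at this ⊢
  linarith [neg_abs_le (t - φ w), le_abs_self (φ z - φ w)]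

lemma continuous_infDist_mkPt (s : Set (EuclideanSpace ℝ (Fin (n + 1))))
    (z : EuclideanSpace ℝ (Fin n)) : Continuous fun t => infDist (mkPt n t z) s :=
  (continuous_infDist_pt s).comp (continuous_mkPt_left z)

lemma exists_mem_offsetLevels_le (hφ : LipschitzWith L φ) (hδ : 0 < δ)
    {z : EuclideanSpace ℝ (Fin n)} {s : ℝ} (hs : s ≤ φ z)
    (hδs : infDist (mkPt n s z) (graphSet n φ) ≤ δ) :
    ∃ t ∈ offsetLevels n φ δ z, t ≤ s := by
  set a := min s (φ z - √(1 + (L : ℝ) ^ 2) * δ)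
  have hδa : δ ≤ infDist (mkPt n a z) (graphSet n φ) := by
    have h := sub_le_mul_infDist_mkPt_graphSet hφ z a
    have ha : a ≤ φ z - √(1 + (L : ℝ) ^ 2) * δ := min_le_right _ _
    exact le_of_mul_le_mul_left (by linarith) (by positivity : 0 < √(1 + (L : ℝ) ^ 2))
  obtain ⟨t, ⟨hat, hts⟩, hδt⟩ := intermediate_value_Icc' (min_le_left _ _)
    (continuous_infDist_mkPt (graphSet n φ) z).continuousOn ⟨hδs, hδa⟩
  refine ⟨t, ⟨hδt, (hts.trans hs).lt_of_ne ?_⟩, hts⟩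
  rintro rfl
  exact hδ.ne (hδt.symm.trans (infDist_zero_of_mem (mkPt_mem_graphSet φ z))).symm

lemma le_sub_of_mem_offsetLevels {z : EuclideanSpace ℝ (Fin n)} {t : ℝ}
    (ht : t ∈ offsetLevels n φ δ z) : t ≤ φ z - δ := by
  have h := infDist_mkPt_graphSet_le_abs φ z t
  rw [ht.1, abs_of_pos (sub_pos.2 ht.2)] at h
  linarith

lemma sub_mul_le_of_mem_offsetLevels (hφ : LipschitzWith L φ) {z : EuclideanSpace ℝ (Fin n)}
    {t : ℝ} (ht : t ∈ offsetLevels n φ δ z) : φ z - √(1 + (L : ℝ) ^ 2) * δ ≤ t := by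
  have h := sub_le_mul_infDist_mkPt_graphSet hφ z t
  rw [ht.1] at h
  linarith

lemma bddBelow_offsetLevels (hφ : LipschitzWith L φ) (z : EuclideanSpace ℝ (Fin n)) :
    BddBelow (offsetLevels n φ δ z) :=
  ⟨_, fun _ => sub_mul_le_of_mem_offsetLevels hφ⟩

lemma psiOff_le_of_infDist_le (hφ : LipschitzWith L φ) (hδ : 0 < δ)
    {z : EuclideanSpace ℝ (Fin n)} {s : ℝ} (hs : s ≤ φ z)
    (hδs : infDist (mkPt n s z) (graphSet n φ) ≤ δ) : psiOff n φ δ z ≤ s := by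
  obtain ⟨t, ht, hts⟩ := exists_mem_offsetLevels_le hφ hδ hs hδs
  exact (csInf_le (bddBelow_offsetLevels hφ z) ht).trans hts

lemma psiOff_le_sub (hφ : LipschitzWith L φ) (hδ : 0 < δ) (z : EuclideanSpace ℝ (Fin n)) :
    psiOff n φ δ z ≤ φ z - δ :=
  psiOff_le_of_infDist_le hφ hδ (by linarith) <|
    (infDist_mkPt_graphSet_le_abs φ z _).trans (by rw [sub_sub_cancel, abs_of_pos hδ])

lemma offsetLevels_nonempty (hφ : LipschitzWith L φ) (hδ : 0 < δ) (z : EuclideanSpace ℝ (Fin n)) :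
    (offsetLevels n φ δ z).Nonempty :=
  let ⟨t, ht, _⟩ := exists_mem_offsetLevels_le hφ hδ le_rfl
    ((infDist_zero_of_mem (mkPt_mem_graphSet φ z)).trans_le hδ.le)
  ⟨t, ht⟩

lemma sub_mul_le_psiOff (hφ : LipschitzWith L φ) (hδ : 0 < δ) (z : EuclideanSpace ℝ (Fin n)) :
    φ z - √(1 + (L : ℝ) ^ 2) * δ ≤ psiOff n φ δ z :=
  le_csInf (offsetLevels_nonempty hφ hδ z) fun _ => sub_mul_le_of_mem_offsetLevels hφ

lemma infDist_mkPt_psiOff (hφ : LipschitzWith L φ) (hδ : 0 < δ) (z : EuclideanSpace ℝ (Fin n)) :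
    infDist (mkPt n (psiOff n φ δ z) z) (graphSet n φ) = δ := by
  have hclosed : IsClosed {t | infDist (mkPt n t z) (graphSet n φ) = δ} :=
    isClosed_eq (continuous_infDist_mkPt _ z) continuous_const
  exact closure_minimal (fun _ ht => ht.1) hclosed <|
    csInf_mem_closure (offsetLevels_nonempty hφ hδ z) (bddBelow_offsetLevels hφ z)

lemma infDist_mkPt_add_mul_dist_le (hφ : LipschitzWith L φ) {z w : EuclideanSpace ℝ (Fin n)}
    {t : ℝ} (h : t + L * dist z w ≤ φ w) :
    infDist (mkPt n (t + L * dist z w) w) (graphSet n φ) ≤ infDist (mkPt n t z) (graphSet n φ) := by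
  set U := {p : EuclideanSpace ℝ (Fin (n + 1)) | φ (tailPt n p) ≤ p 0}
  have hgraph : graphSet n φ ⊆ U := by
    rw [graphSet_eq]
    exact fun p hp => hp.ge
  have hU : ∀ u ∈ U, u + mkPt n (L * dist z w) (w - z) ∈ U := by
    intro u hu
    have := hφ.dist_le_mul (tailPt n u + (w - z)) (tailPt n u)
    rw [dist_self_add_left, ← dist_eq_norm', Real.dist_eq] at this
    simp only [U, Set.mem_ofPred_eq, tailPt_add, tailPt_mkPt, PiLp.add_apply, mkPt_apply_zero]
      at hu ⊢
    linarith [le_abs_self (φ (tailPt n u + (w - z)) - φ (tailPt n u)), dist_comm z w]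
  calc infDist (mkPt n (t + L * dist z w) w) (graphSet n φ)
      ≤ infDist (mkPt n (t + L * dist z w) w) U := by
        rw [graphSet_eq]
        exact infDist_setOf_eq_le_infDist_setOf_le (by fun_prop)
          (hφ.continuous.comp continuous_tailPt) (by simpa using h)
    _ = infDist (mkPt n t z + mkPt n (L * dist z w) (w - z)) U := by
        rw [mkPt_add, add_sub_cancel]
    _ ≤ infDist (mkPt n t z) U := infDist_add_le_of_add_mem ⟨_, hgraph (mkPt_mem_graphSet φ z)⟩ hU _
    _ ≤ infDist (mkPt n t z) (graphSet n φ) :=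
        infDist_le_infDist_of_subset hgraph ⟨_, mkPt_mem_graphSet φ z⟩

lemma lipschitzWith_psiOff (hφ : LipschitzWith L φ) (hδ : 0 < δ) :
    LipschitzWith L (psiOff n φ δ) := by
  refine LipschitzWith.of_le_add_mul L fun w z => ?_
  rw [dist_comm]
  rcases le_total (psiOff n φ δ z + L * dist z w) (φ w) with h | h
  · refine psiOff_le_of_infDist_le hφ hδ h ?_
    exact (infDist_mkPt_add_mul_dist_le hφ h).trans (infDist_mkPt_psiOff hφ hδ z).le
  · linarith [psiOff_le_sub hφ hδ w, dist_comm z w]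

end Offset

lemma abs_collar_sub_sub_le {δ t t' a a' b b' m : ℝ} (hδ : 0 < δ) (ht : |t| ≤ δ)
    (ha : |a - a'| ≤ m) (hb : |b - b'| ≤ m) :
    |((1 + t / δ) * a - t / δ * b) - ((1 + t' / δ) * a' - t' / δ * b')
      - (t - t') * ((a' - b') / δ)| ≤ 3 * m := by
  have hsplit : ((1 + t / δ) * a - t / δ * b) - ((1 + t' / δ) * a' - t' / δ * b')
      - (t - t') * ((a' - b') / δ) = (a - a') + t / δ * ((a - a') - (b - b')) := by
    field_simp
    ring
  have htδ : |t / δ| ≤ 1 := by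
    rw [abs_div, abs_of_pos hδ]
    exact (div_le_one hδ).2 ht
  rw [hsplit]
  calc _ ≤ |a - a'| + |t / δ| * (|a - a'| + |b - b'|) := by
        refine (abs_add_le _ _).trans ?_
        rw [abs_mul]
        gcongr
        exact abs_sub _ _
    _ ≤ m + 1 * (m + m) := by gcongr
    _ = 3 * m := by ring

section Collar

variable {n : ℕ} {L : ℝ≥0} {φ ψ : EuclideanSpace ℝ (Fin n) → ℝ} {δ S : ℝ}

@[simp] lemma collarMap_apply_zero (x : EuclideanSpace ℝ (Fin (n + 1))) :
    collarMap n φ ψ δ x 0 = (1 + x 0 / δ) * φ (tailPt n x) - x 0 / δ * ψ (tailPt n x) := rfl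

@[simp] lemma tailPt_collarMap (x : EuclideanSpace ℝ (Fin (n + 1))) :
    tailPt n (collarMap n φ ψ δ x) = tailPt n x := rfl

lemma abs_collarMap_sub_le (hδ : 0 < δ) (hφ : LipschitzWith L φ) (hψ : LipschitzWith L ψ)
    (hψφ : ∀ z, ψ z ≤ φ z - δ) (hφψ : ∀ z, φ z - S * δ ≤ ψ z)
    {x y : EuclideanSpace ℝ (Fin (n + 1))} (hx : |x 0| ≤ δ) :
    |collarMap n φ ψ δ x 0 - collarMap n φ ψ δ y 0|
        ≤ S * |x 0 - y 0| + 3 * L * dist (tailPt n x) (tailPt n y) ∧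
      |x 0 - y 0| ≤ 1 * |collarMap n φ ψ δ x 0 - collarMap n φ ψ δ y 0|
        + 3 * L * dist (tailPt n x) (tailPt n y) := by
  set c := (φ (tailPt n y) - ψ (tailPt n y)) / δ
  have hc1 : 1 ≤ c := by
    rw [le_div_iff₀ hδ]
    linarith [hψφ (tailPt n y)]
  have hcS : c ≤ S := by
    rw [div_le_iff₀ hδ]
    linarith [hφψ (tailPt n y)]
  have hlip {f : EuclideanSpace ℝ (Fin n) → ℝ} (hf : LipschitzWith L f) :
      |f (tailPt n x) - f (tailPt n y)| ≤ L * dist (tailPt n x) (tailPt n y) := by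
    simpa only [Real.dist_eq] using hf.dist_le_mul _ _
  have herr := abs_collar_sub_sub_le (t' := y 0) hδ hx (hlip hφ) (hlip hψ)
  rw [← collarMap_apply_zero, ← collarMap_apply_zero] at herr
  have habs : |(x 0 - y 0) * c| = c * |x 0 - y 0| := by
    rw [abs_mul, abs_of_pos (by linarith : (0 : ℝ) < c), mul_comm]
  constructor
  · linarith [abs_sub_abs_le_abs_sub (collarMap n φ ψ δ x 0 - collarMap n φ ψ δ y 0)
      ((x 0 - y 0) * c), mul_le_mul_of_nonneg_right hcS (abs_nonneg (x 0 - y 0))]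
  · linarith [abs_sub_abs_le_abs_sub ((x 0 - y 0) * c)
      (collarMap n φ ψ δ x 0 - collarMap n φ ψ δ y 0),
      abs_sub_comm ((x 0 - y 0) * c) (collarMap n φ ψ δ x 0 - collarMap n φ ψ δ y 0),
      le_mul_of_one_le_left (abs_nonneg (x 0 - y 0)) hc1]

end Collar

theorem collarMap_biLipschitz_general (n : ℕ)
    (L : NNReal) (φ : EuclideanSpace ℝ (Fin n) → ℝ)
    (hφ : LipschitzWith L φ) :
    ∃ K K' : ℝ, 1 ≤ K ∧ 0 < K' ∧ K' ≤ 1 ∧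
      ∀ (δ : ℝ), 0 < δ →
        ∀ x y : EuclideanSpace ℝ (Fin (n + 1)),
          x ∈ stripe (n + 1) (Nat.succ_pos n) (-δ) 0 →
          y ∈ stripe (n + 1) (Nat.succ_pos n) (-δ) 0 →
          K' * dist x y
              ≤ dist (collarMap n φ (psiOff n φ δ) δ x) (collarMap n φ (psiOff n φ δ) δ y)
            ∧ dist (collarMap n φ (psiOff n φ δ) δ x) (collarMap n φ (psiOff n φ δ) δ y)
              ≤ K * dist x y := by
  set S := √(1 + (L : ℝ) ^ 2)
  have hS : 1 ≤ S := Real.one_le_sqrt.2 (by nlinarith)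
  refine ⟨√(2 * S ^ 2 + 2 * (3 * L) ^ 2 + 1), (√(2 * 1 ^ 2 + 2 * (3 * L) ^ 2 + 1))⁻¹,
    Real.one_le_sqrt.2 (by nlinarith), by positivity,
    inv_le_one_of_one_le₀ (Real.one_le_sqrt.2 (by nlinarith)), ?_⟩
  rintro δ hδ x y ⟨hx₁, hx₂⟩ -
  have hxδ : |x 0| ≤ δ := abs_le.2 ⟨hx₁.le, hx₂.le.trans hδ.le⟩
  obtain ⟨hupper, hlower⟩ := abs_collarMap_sub_le hδ hφ (lipschitzWith_psiOff hφ hδ)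
    (psiOff_le_sub hφ hδ) (sub_mul_le_psiOff hφ hδ) (y := y) hxδ
  refine ⟨?_, dist_le_mul_dist_of_abs_sub_le (by simp) hupper⟩
  rw [inv_mul_le_iff₀ (by positivity)]
  exact dist_le_mul_dist_of_abs_sub_le (by simp) (by simpa using hlower)

/-- the fiber-wise collar straightening map is bi-Lipschitz with
constants depending only on `L` (not on `δ`). -/
theorem collarMap_biLipschitz (n : ℕ) (hn : 1 ≤ n)
    (L : NNReal) (φ : EuclideanSpace ℝ (Fin n) → ℝ)
    (hφ0 : ∀ xb, 0 ≤ φ xb) (hφ : LipschitzWith L φ) :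
    ∃ K K' : ℝ, 1 ≤ K ∧ 0 < K' ∧ K' ≤ 1 ∧
      ∀ (δ : ℝ), 0 < δ →
        ∀ x y : EuclideanSpace ℝ (Fin (n + 1)),
          x ∈ stripe (n + 1) (Nat.succ_pos n) (-δ) 0 →
          y ∈ stripe (n + 1) (Nat.succ_pos n) (-δ) 0 →
          K' * dist x y
              ≤ dist (collarMap n φ (psiOff n φ δ) δ x) (collarMap n φ (psiOff n φ δ) δ y)
            ∧ dist (collarMap n φ (psiOff n φ δ) δ x) (collarMap n φ (psiOff n φ δ) δ y)
              ≤ K * dist x y :=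
  collarMap_biLipschitz_general n L φ hφ
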